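/- Let B*, B₀ ∈ ℝ^{k×d} have orthonormal rows with ‖B₀ − B*‖₂ ≤ ε, let S ⊆ ℝ^d be a subspace with k ≤ dim(S⊥), and suppose c := cangle(rowspace(B₀), S⊥) > 0. Let B ∈ ℝ^{k×d} satisfy B x = B₀ x for every x ∈ S⊥. Then for all v, v* ∈ ℝ^k: ‖v − v*‖₂ ≤ (‖Bᵀ v − B*ᵀ v*‖₂ + ε ‖v*‖₂) / c. -/

import Mathlib

/-! Write `Bᵀv − B*ᵀv* = B₀ᵀ(v − v*) + (B − B₀)ᵀv + (B₀ − B*)ᵀv*`. The middle term is orthogonal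
to `S⊥`, since `B − B₀` vanishes on `S⊥`, so adding it does not change the projection onto `S⊥`.
The first term lies in the row space of `B₀`, so its projection onto `S⊥` has norm at least `c`
times its own norm, which is `‖v − v*‖` because `B₀` has orthonormal rows. The last term has norm
at most `‖B₀ − B*‖₂ ‖v*‖₂ ≤ ε ‖v*‖₂`. -/

open Matrix

noncomputable section

def toE {n : ℕ} (x : Fin n → ℝ) : EuclideanSpace ℝ (Fin n) := WithLp.toLp 2 x

def ofE {n : ℕ} (x : EuclideanSpace ℝ (Fin n)) : Fin n → ℝ := x

def enorm2 {n : ℕ} (x : Fin n → ℝ) : ℝ := ‖toE x‖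

def specNorm {m n : ℕ} (M : Matrix (Fin m) (Fin n) ℝ) : ℝ :=
  sSup {c | ∃ x : Fin n → ℝ, enorm2 x = 1 ∧ c = enorm2 (M.mulVec x)}

def rowspace {k d : ℕ} (B : Matrix (Fin k) (Fin d) ℝ) :
    Submodule ℝ (EuclideanSpace ℝ (Fin d)) :=
  Submodule.span ℝ (Set.range fun i => toE (B i))

def cangle {d : ℕ} (R T : Submodule ℝ (EuclideanSpace ℝ (Fin d))) : ℝ :=
  sInf {c | ∃ r ∈ R, ‖r‖ = 1 ∧ c = ‖(T.orthogonalProjectionOnto r : EuclideanSpace ℝ (Fin d))‖}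

open scoped Matrix.Norms.L2Operator

lemma specNorm_eq_l2_opNorm {m n : ℕ} (M : Matrix (Fin m) (Fin n) ℝ) : specNorm M = ‖M‖ := by
  set L := (toEuclideanLin (𝕜 := ℝ) (m := Fin m) (n := Fin n)).trans
    LinearMap.toContinuousLinearMap M
  have hM : ‖M‖ = ‖L‖ := l2_opNorm_def M
  have hL : ∀ x : Fin n → ℝ, enorm2 (M *ᵥ x) = ‖L (toE x)‖ := fun x => rfl
  have hbound : ∀ c ∈ {c | ∃ x : Fin n → ℝ, enorm2 x = 1 ∧ c = enorm2 (M *ᵥ x)}, c ≤ ‖M‖ := by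
    rintro c ⟨x, hx, rfl⟩
    rw [hL, hM]
    exact (L.le_opNorm (toE x)).trans_eq (by rw [show ‖toE x‖ = 1 from hx, mul_one])
  refine le_antisymm (Real.sSup_le hbound (norm_nonneg M)) ?_
  rw [hM]
  refine L.opNorm_le_bound (Real.sSup_nonneg ?_) fun x => ?_
  · rintro c ⟨x, -, rfl⟩; exact norm_nonneg _
  rcases eq_or_ne x 0 with rfl | hx
  · simp
  set u := ‖x‖⁻¹ • x
  have hu : ‖u‖ = 1 := norm_smul_inv_norm hx
  have hmem : ‖L u‖ ∈ {c | ∃ x : Fin n → ℝ, enorm2 x = 1 ∧ c = enorm2 (M *ᵥ x)} :=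
    ⟨ofE u, hu, (hL _).symm⟩
  calc ‖L x‖ = ‖x‖ * ‖L u‖ := by
        rw [map_smul, norm_smul, norm_inv, norm_norm, mul_inv_cancel_left₀ (norm_ne_zero_iff.2 hx)]
    _ ≤ ‖x‖ * specNorm M := by gcongr; exact le_csSup ⟨_, hbound⟩ hmem
    _ = specNorm M * ‖x‖ := mul_comm _ _

lemma enorm2_transpose_mulVec_le {m n : ℕ} (M : Matrix (Fin m) (Fin n) ℝ) (v : Fin m → ℝ) :
    enorm2 (Mᵀ *ᵥ v) ≤ specNorm M * enorm2 v := by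
  rw [specNorm_eq_l2_opNorm, ← l2_opNorm_conjTranspose, conjTranspose_eq_transpose_of_trivial]
  exact l2_opNorm_mulVec Mᵀ (toE v)

lemma enorm2_sq {n : ℕ} (x : Fin n → ℝ) : enorm2 x ^ 2 = x ⬝ᵥ x := by
  rw [enorm2, toE, ← real_inner_self_eq_norm_sq, EuclideanSpace.inner_toLp_toLp, star_trivial]

lemma enorm2_transpose_mulVec_of_mul_transpose_eq_one {m n : ℕ} {M : Matrix (Fin m) (Fin n) ℝ}
    (hM : M * Mᵀ = 1) (u : Fin m → ℝ) : enorm2 (Mᵀ *ᵥ u) = enorm2 u := by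
  have hsq : enorm2 (Mᵀ *ᵥ u) ^ 2 = enorm2 u ^ 2 := by
    rw [enorm2_sq, enorm2_sq, mulVec_transpose, ← dotProduct_mulVec, ← mulVec_transpose,
      mulVec_mulVec, hM, one_mulVec]
  exact (pow_left_inj₀ (norm_nonneg _) (norm_nonneg _) two_ne_zero).1 hsq

lemma toE_transpose_mulVec_mem_rowspace {m n : ℕ} (M : Matrix (Fin m) (Fin n) ℝ)
    (u : Fin m → ℝ) : toE (Mᵀ *ᵥ u) ∈ rowspace M := by
  rw [mulVec_transpose, vecMul_eq_sum, toE, WithLp.toLp_sum]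
  exact Submodule.sum_mem _ fun i _ => Submodule.smul_mem _ _ (Submodule.subset_span ⟨i, rfl⟩)

lemma toE_transpose_mulVec_mem_orthogonal {m n : ℕ} {M : Matrix (Fin m) (Fin n) ℝ}
    {K : Submodule ℝ (EuclideanSpace ℝ (Fin n))} (hM : ∀ x ∈ K, M *ᵥ ofE x = 0)
    (v : Fin m → ℝ) : toE (Mᵀ *ᵥ v) ∈ Kᗮ := by
  intro x hx
  rw [EuclideanSpace.inner_eq_star_dotProduct, star_trivial]
  change (Mᵀ *ᵥ v) ⬝ᵥ ofE x = 0
  rw [mulVec_transpose, ← dotProduct_mulVec, hM x hx, dotProduct_zero]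

lemma cangle_mul_norm_le {d : ℕ} {R : Submodule ℝ (EuclideanSpace ℝ (Fin d))}
    (T : Submodule ℝ (EuclideanSpace ℝ (Fin d))) {r : EuclideanSpace ℝ (Fin d)} (hr : r ∈ R) :
    cangle R T * ‖r‖ ≤ ‖(T.orthogonalProjectionOnto r : EuclideanSpace ℝ (Fin d))‖ := by
  rcases eq_or_ne r 0 with rfl | hr0
  · simp
  have hmem : ‖(T.orthogonalProjectionOnto (‖r‖⁻¹ • r) : EuclideanSpace ℝ (Fin d))‖ ∈
      {c | ∃ r ∈ R, ‖r‖ = 1 ∧ c = ‖(T.orthogonalProjectionOnto r : EuclideanSpace ℝ (Fin d))‖} :=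
    ⟨_, R.smul_mem _ hr, norm_smul_inv_norm hr0, rfl⟩
  have hle := csInf_le ⟨0, by rintro c ⟨r, -, -, rfl⟩; exact norm_nonneg _⟩ hmem
  rw [map_smul, Submodule.coe_smul, norm_smul, norm_inv, norm_norm] at hle
  have hpos : 0 < ‖r‖ := norm_pos_iff.2 hr0
  calc cangle R T * ‖r‖
      ≤ ‖r‖⁻¹ * ‖(T.orthogonalProjectionOnto r : EuclideanSpace ℝ (Fin d))‖ * ‖r‖ := by
        gcongr; exact hle
    _ = _ := by field_simp

lemma cangle_mul_norm_le_norm_add {d : ℕ} {R T : Submodule ℝ (EuclideanSpace ℝ (Fin d))}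
    {r b : EuclideanSpace ℝ (Fin d)} (hr : r ∈ R) (hb : b ∈ Tᗮ) :
    cangle R T * ‖r‖ ≤ ‖r + b‖ :=
  calc cangle R T * ‖r‖ ≤ ‖(T.orthogonalProjectionOnto r : EuclideanSpace ℝ (Fin d))‖ :=
        cangle_mul_norm_le T hr
    _ = ‖(T.orthogonalProjectionOnto (r + b) : EuclideanSpace ℝ (Fin d))‖ := by
        rw [map_add, T.orthogonalProjectionOnto_apply_of_mem_orthogonal hb, add_zero]
    _ ≤ ‖r + b‖ := T.norm_orthogonalProjectionOnto_apply_le _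

theorem stmt_6_general {k d : ℕ} (Bstar B0 : Matrix (Fin k) (Fin d) ℝ)
    (hB0 : B0 * B0ᵀ = 1)
    (ε : ℝ) (hε : specNorm (B0 - Bstar) ≤ ε)
    (S : Submodule ℝ (EuclideanSpace ℝ (Fin d)))
    (hc : 0 < cangle (rowspace B0) Sᗮ)
    (B : Matrix (Fin k) (Fin d) ℝ)
    (hagree : ∀ x ∈ Sᗮ, B.mulVec (ofE x) = B0.mulVec (ofE x)) :
    ∀ v vstar : Fin k → ℝ,
      enorm2 (v - vstar) ≤
        (enorm2 (Bᵀ.mulVec v - Bstarᵀ.mulVec vstar) + ε * enorm2 vstar) /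
          cangle (rowspace B0) Sᗮ := by
  intro v vstar
  have hsplit : Bᵀ *ᵥ v - Bstarᵀ *ᵥ vstar - (B0 - Bstar)ᵀ *ᵥ vstar =
      B0ᵀ *ᵥ (v - vstar) + (B - B0)ᵀ *ᵥ v := by
    simp only [transpose_sub, sub_mulVec, mulVec_sub]
    abel
  have hkernel : ∀ x ∈ Sᗮ, (B - B0) *ᵥ ofE x = 0 := fun x hx => by
    rw [sub_mulVec, hagree x hx, sub_self]
  have hangle := cangle_mul_norm_le_norm_add (toE_transpose_mulVec_mem_rowspace B0 (v - vstar))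
    (toE_transpose_mulVec_mem_orthogonal hkernel v)
  rw [le_div_iff₀ hc]
  calc enorm2 (v - vstar) * cangle (rowspace B0) Sᗮ
      = cangle (rowspace B0) Sᗮ * enorm2 (B0ᵀ *ᵥ (v - vstar)) := by
        rw [enorm2_transpose_mulVec_of_mul_transpose_eq_one hB0, mul_comm]
    _ ≤ enorm2 (Bᵀ *ᵥ v - Bstarᵀ *ᵥ vstar - (B0 - Bstar)ᵀ *ᵥ vstar) := by
        rw [hsplit]; exact hangle
    _ ≤ enorm2 (Bᵀ *ᵥ v - Bstarᵀ *ᵥ vstar) + enorm2 ((B0 - Bstar)ᵀ *ᵥ vstar) :=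
        norm_sub_le (toE _) (toE _)
    _ ≤ enorm2 (Bᵀ *ᵥ v - Bstarᵀ *ᵥ vstar) + ε * enorm2 vstar := by
        grw [enorm2_transpose_mulVec_le, hε]
        exact norm_nonneg _

/-- if `B` agrees with `B₀` on `S⊥`, where `B₀` is `ε`-close to the orthonormal
`B*` and `c = cangle(rowspace B₀, S⊥) > 0`, then any heads `v, v*` satisfy
`‖v − v*‖₂ ≤ (‖Bᵀ v − B*ᵀ v*‖₂ + ε ‖v*‖₂) / c`. -/
theorem stmt_6 {k d : ℕ} (Bstar B0 : Matrix (Fin k) (Fin d) ℝ)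
    (hBs : Bstar * Bstarᵀ = 1) (hB0 : B0 * B0ᵀ = 1)
    (ε : ℝ) (hε : specNorm (B0 - Bstar) ≤ ε)
    (S : Submodule ℝ (EuclideanSpace ℝ (Fin d)))
    (hdim : k ≤ Module.finrank ℝ Sᗮ)
    (hc : 0 < cangle (rowspace B0) Sᗮ)
    (B : Matrix (Fin k) (Fin d) ℝ)
    (hagree : ∀ x ∈ Sᗮ, B.mulVec (ofE x) = B0.mulVec (ofE x)) :
    ∀ v vstar : Fin k → ℝ,
      enorm2 (v - vstar) ≤
        (enorm2 (Bᵀ.mulVec v - Bstarᵀ.mulVec vstar) + ε * enorm2 vstar) /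
          cangle (rowspace B0) Sᗮ :=
  stmt_6_general Bstar B0 hB0 ε hε S hc B hagree

end
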